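/- The SAND update dynamics on a finite graph terminate: starting from any configuration, the process where (i) a sensor with no router in its closed neighborhood becomes a router, and (ii) a router adjacent to another router with strictly smaller timestamp (timestamps fixed and injective) becomes a sensor, applied fairly, reaches a fixed point in finitely many steps. -/

import Mathlib

def Indep {V : Type*} (G : SimpleGraph V) (S : Set V) : Prop :=
  ∀ u ∈ S, ∀ v ∈ S, ¬ G.Adj u v

def Dominating {V : Type*} (G : SimpleGraph V) (S : Set V) : Prop :=
  ∀ v : V, v ∈ S ∨ ∃ u ∈ S, G.Adj v u

section

variable {V : Type*} (G : SimpleGraph V) (ts : V → ℕ)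

/-- Rule (i): a sensor with no router in its closed neighborhood may become a router. -/
def RouterEnabled (c : V → Bool) (v : V) : Prop :=
  c v = false ∧ ∀ u : V, (u = v ∨ G.Adj v u) → c u = false

/-- Rule (ii): a router adjacent to a router of strictly smaller timestamp
may become a sensor. -/
def SensorEnabled (c : V → Bool) (v : V) : Prop :=
  c v = true ∧ ∃ u : V, G.Adj v u ∧ c u = true ∧ ts u < ts v

def Enabled (c : V → Bool) (v : V) : Prop :=
  RouterEnabled G c v ∨ SensorEnabled G ts c v

/-- One step of the dynamics flips the state of exactly one enabled vertex. -/
def Step (c c' : V → Bool) : Prop :=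
  ∃ v : V, Enabled G ts c v ∧ c' v = ! c v ∧ ∀ u : V, u ≠ v → c' u = c u

open Filter

theorem Filter.EventuallyConst.pi {α ι β : Type*} [Finite ι] [Nonempty β] {l : Filter α}
    {f : α → ι → β} (h : ∀ i, EventuallyConst (fun a => f a i) l) : EventuallyConst f l := by
  choose y hy using fun i => eventuallyConst_iff_exists_eventuallyEq.1 (h i)
  refine eventuallyConst_iff_exists_eventuallyEq.2 ⟨y, ?_⟩
  filter_upwards [eventually_all.2 hy] with a ha
  exact funext ha

theorem Bool.eventuallyConst_of_eventually_absorbing {s : ℕ → Bool} {b : Bool}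
    (h : ∀ᶠ n in atTop, s n = b → s (n + 1) = b) : EventuallyConst s atTop := by
  obtain ⟨N, hN⟩ := eventually_atTop.1 h
  refine eventuallyConst_iff_exists_eventuallyEq.2 ?_
  by_cases hreach : ∃ m, N ≤ m ∧ s m = b
  · obtain ⟨m, hNm, hm⟩ := hreach
    refine ⟨b, eventually_atTop.2 ⟨m, fun k hk => ?_⟩⟩
    induction k, hk using Nat.le_induction with
    | base => exact hm
    | succ k hk ih => exact hN k (hNm.trans hk) ih
  · push Not at hreach
    exact ⟨!b, eventually_atTop.2 ⟨N, fun k hk => Bool.eq_not.2 (hreach k hk)⟩⟩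

theorem enabled_of_ne {c c' : V → Bool} (h : Step G ts c c' ∨ c' = c) {v : V}
    (hv : c' v ≠ c v) : Enabled G ts c v := by
  rcases h with ⟨w, hw, -, hother⟩ | rfl
  · obtain rfl : v = w := by_contra fun hvw => hv (hother v hvw)
    exact hw
  · exact absurd rfl hv

theorem apply_eq_false_of_not_routerEnabled {c c' : V → Bool} (h : Step G ts c c' ∨ c' = c)
    {v : V} (hv : c v = false) (hR : ¬RouterEnabled G c v) : c' v = false := by
  by_contra hne
  rcases enabled_of_ne G ts h (by rwa [hv]) with hR' | ⟨hv', -⟩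
  · exact hR hR'
  · simp [hv] at hv'

theorem apply_eq_true_of_not_sensorEnabled {c c' : V → Bool} (h : Step G ts c c' ∨ c' = c)
    {v : V} (hv : c v = true) (hS : ¬SensorEnabled G ts c v) : c' v = true := by
  by_contra hne
  rcases enabled_of_ne G ts h (by rwa [hv]) with ⟨hv', -⟩ | hS'
  · simp [hv] at hv'
  · exact hS hS'

/-- Once the vertices of smaller timestamp have settled, either one of `v`'s earlier neighbours
stays a router, which blocks rule (i) at `v`, or none does, which blocks rule (ii) at `v`. -/
theorem eventuallyConst_of_eventuallyConst_lower [Finite V] {c : ℕ → V → Bool}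
    (hrun : ∀ n, Step G ts (c n) (c (n + 1)) ∨ c (n + 1) = c n) (v : V)
    (hlow : ∀ u, ts u < ts v → EventuallyConst (fun n => c n u) atTop) :
    EventuallyConst (fun n => c n v) atTop := by
  by_cases hrouter : ∃ u, G.Adj v u ∧ ts u < ts v ∧ ∀ᶠ n in atTop, c n u = true
  · obtain ⟨u, hadj, -, hu⟩ := hrouter
    refine Bool.eventuallyConst_of_eventually_absorbing (b := false) ?_
    filter_upwards [hu] with n hun hvn
    refine apply_eq_false_of_not_routerEnabled G ts (hrun n) hvn fun hR => ?_
    simp [hR.2 u (Or.inr hadj)] at hun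
  · have hsensors : ∀ᶠ n in atTop, ∀ u, G.Adj v u → ts u < ts v → c n u = false := by
      refine eventually_all.2 fun u => ?_
      simp only [eventually_imp_distrib_left]
      intro hadj hlt
      rcases eventuallyConst_pred.1 ((hlow u hlt).comp (· = true)) with htrue | hfalse
      · exact absurd ⟨u, hadj, hlt, htrue⟩ hrouter
      · simpa using hfalse
    refine Bool.eventuallyConst_of_eventually_absorbing (b := true) ?_
    filter_upwards [hsensors] with n hn hvn
    refine apply_eq_true_of_not_sensorEnabled G ts (hrun n) hvn ?_
    rintro ⟨-, u, hadj, hu, hlt⟩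
    simp [hn u hadj hlt] at hu

theorem eventuallyConst_of_run [Finite V] {c : ℕ → V → Bool}
    (hrun : ∀ n, Step G ts (c n) (c (n + 1)) ∨ c (n + 1) = c n) :
    EventuallyConst c atTop := by
  refine EventuallyConst.pi fun v => ?_
  induction hv : ts v using Nat.strong_induction_on generalizing v with
  | _ k ih =>
    exact eventuallyConst_of_eventuallyConst_lower G ts hrun v fun u hu => ih _ (hv ▸ hu) u rfl

theorem exists_forall_not_enabled_of_eventuallyConst {c : ℕ → V → Bool}
    (hfair : ∀ n : ℕ, ∀ v : V, Enabled G ts (c n) v →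
      ∃ m : ℕ, n ≤ m ∧ (c (m + 1) v ≠ c m v ∨ ¬ Enabled G ts (c m) v))
    (hc : EventuallyConst c atTop) : ∃ n : ℕ, ∀ v : V, ¬ Enabled G ts (c n) v := by
  obtain ⟨M, hM⟩ := eventuallyConst_atTop.1 hc
  refine ⟨M, fun v hv => ?_⟩
  obtain ⟨m, hm, hflip | hdisabled⟩ := hfair M v hv
  · exact hflip (by rw [hM (m + 1) (by omega), hM m hm])
  · exact hdisabled (hM m hm ▸ hv)

theorem sand_dynamics_terminate_general {V : Type*} [Fintype V]
    (G : SimpleGraph V) (ts : V → ℕ)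
    (c : ℕ → V → Bool)
    (hstep : ∀ n : ℕ,
      Step G ts (c n) (c (n+1)) ∨ (c (n+1) = c n ∧ ∀ v : V, ¬ Enabled G ts (c n) v))
    (hfair : ∀ n : ℕ, ∀ v : V, Enabled G ts (c n) v →
      ∃ m : ℕ, n ≤ m ∧ (c (m+1) v ≠ c m v ∨ ¬ Enabled G ts (c m) v)) :
    ∃ n : ℕ, ∀ v : V, ¬ Enabled G ts (c n) v :=
  exists_forall_not_enabled_of_eventuallyConst G ts hfair <|
    eventuallyConst_of_run G ts fun n => (hstep n).imp_right And.left

theorem sand_dynamics_terminate {V : Type*} [Fintype V]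
    (G : SimpleGraph V) (ts : V → ℕ) (hts : Function.Injective ts)
    (c : ℕ → V → Bool)
    (hstep : ∀ n : ℕ,
      Step G ts (c n) (c (n+1)) ∨ (c (n+1) = c n ∧ ∀ v : V, ¬ Enabled G ts (c n) v))
    (hfair : ∀ n : ℕ, ∀ v : V, Enabled G ts (c n) v →
      ∃ m : ℕ, n ≤ m ∧ (c (m+1) v ≠ c m v ∨ ¬ Enabled G ts (c m) v)) :
    ∃ n : ℕ, ∀ v : V, ¬ Enabled G ts (c n) v :=
  sand_dynamics_terminate_general G ts c hstep hfair

end
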